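/- Let G be a graph on n vertices, let 𝓑 be a bramble for G, and let w : 𝓑 → ℝ≥0 be a weight function such that for each vertex v the sum of w(B) over all B ∈ 𝓑 containing v is at most 1. If h = ∑_{B∈𝓑} w(B), then 𝓑 contains a subcollection of at least h²/(2n) pairwise vertex-disjoint subgraphs. -/

import Mathlib

open Finset

/-- Any two members of a bramble either share a vertex or are joined by an edge,
and each member induces a connected subgraph. -/
def IsBramble {V : Type} (G : SimpleGraph V) (B : Finset (Finset V)) : Prop :=
  (∀ A ∈ B, (G.induce (A : Set V)).Connected) ∧
    ∀ A ∈ B, ∀ A' ∈ B, (∃ v, v ∈ A ∧ v ∈ A') ∨ ∃ a ∈ A, ∃ b ∈ A', G.Adj a b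

/-- A strong bramble: any two (possibly equal) members are joined by an edge. -/
def IsStrongBramble {V : Type} (G : SimpleGraph V) (B : Finset (Finset V)) : Prop :=
  (∀ A ∈ B, (G.induce (A : Set V)).Connected) ∧
    ∀ A ∈ B, ∀ A' ∈ B, ∃ a ∈ A, ∃ b ∈ A', G.Adj a b

/-- A valid weighting: nonnegative weights whose total at every vertex is at most 1. -/
def IsValidWeight {V : Type} [DecidableEq V] (B : Finset (Finset V)) (w : Finset V → ℝ) : Prop :=
  (∀ A ∈ B, 0 ≤ w A) ∧ ∀ v : V, ∑ A ∈ B.filter (fun A => v ∈ A), w A ≤ 1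

/-- The fractional Hadwiger number. -/
noncomputable def fracHadwiger {V : Type} [Fintype V] [DecidableEq V] (G : SimpleGraph V) : ℝ :=
  sSup {h : ℝ | ∃ B : Finset (Finset V), ∃ w : Finset V → ℝ,
    IsBramble G B ∧ IsValidWeight B w ∧ h = ∑ A ∈ B, w A}

/-- The r-integral Hadwiger number: all weights multiples of 1/r. -/
noncomputable def rIntHadwiger {V : Type} [Fintype V] [DecidableEq V]
    (G : SimpleGraph V) (r : ℕ) : ℝ :=
  sSup {h : ℝ | ∃ B : Finset (Finset V), ∃ w : Finset V → ℝ,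
    IsBramble G B ∧ IsValidWeight B w ∧ (∀ A ∈ B, ∃ k : ℕ, w A = k / r) ∧
    h = ∑ A ∈ B, w A}

/-- The lower fractional Hadwiger number (using strong brambles). -/
noncomputable def lowerFracHadwiger {V : Type} [Fintype V] [DecidableEq V]
    (G : SimpleGraph V) : ℝ :=
  sSup {h : ℝ | ∃ B : Finset (Finset V), ∃ w : Finset V → ℝ,
    IsStrongBramble G B ∧ IsValidWeight B w ∧ h = ∑ A ∈ B, w A}

/-- The lower r-integral Hadwiger number. -/
noncomputable def lowerRIntHadwiger {V : Type} [Fintype V] [DecidableEq V]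
    (G : SimpleGraph V) (r : ℕ) : ℝ :=
  sSup {h : ℝ | ∃ B : Finset (Finset V), ∃ w : Finset V → ℝ,
    IsStrongBramble G B ∧ IsValidWeight B w ∧ (∀ A ∈ B, ∃ k : ℕ, w A = k / r) ∧
    h = ∑ A ∈ B, w A}

/-- `G` has a clique minor of order `t`. -/
def HasCliqueMinor {V : Type} (G : SimpleGraph V) (t : ℕ) : Prop :=
  ∃ f : Fin t → Finset V,
    (∀ i, (f i).Nonempty) ∧
    (∀ i, (G.induce ((f i : Set V))).Connected) ∧
    (∀ i j, i ≠ j → Disjoint (f i) (f j)) ∧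
    (∀ i j, i ≠ j → ∃ a ∈ f i, ∃ b ∈ f j, G.Adj a b)

/-- `G` has a clique minor of order `t` and breadth at most `d` (each part has ≤ d vertices). -/
def HasCliqueMinorBreadth {V : Type} (G : SimpleGraph V) (t : ℕ) (d : ℝ) : Prop :=
  ∃ f : Fin t → Finset V,
    (∀ i, (f i).Nonempty) ∧
    (∀ i, (G.induce ((f i : Set V))).Connected) ∧
    (∀ i j, i ≠ j → Disjoint (f i) (f j)) ∧
    (∀ i j, i ≠ j → ∃ a ∈ f i, ∃ b ∈ f j, G.Adj a b) ∧
    (∀ i, ((f i).card : ℝ) ≤ d)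

/-- The Hadwiger number: the largest order of a clique minor. -/
noncomputable def hadwigerNumber {V : Type} (G : SimpleGraph V) : ℕ :=
  sSup {t : ℕ | HasCliqueMinor G t}

/-- The lexicographic product of two graphs. -/
def lexProd {α β : Type} (G : SimpleGraph α) (H : SimpleGraph β) : SimpleGraph (α × β) where
  Adj x y := G.Adj x.1 y.1 ∨ (x.1 = y.1 ∧ H.Adj x.2 y.2)
  symm := by
    constructor
    intro x y hxy
    rcases hxy with h | ⟨h1, h2⟩
    · exact Or.inl h.symm
    · exact Or.inr ⟨h1.symm, h2.symm⟩
  loopless := by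
    constructor
    intro x hx
    rcases hx with h | ⟨_, h2⟩
    · exact G.loopless.irrefl _ h
    · exact H.loopless.irrefl _ h2

/-- The complete blow-up `G[r] = G · K_r`. -/
def completeBlowup {α : Type} (G : SimpleGraph α) (r : ℕ) : SimpleGraph (α × Fin r) :=
  lexProd G (⊤ : SimpleGraph (Fin r))

/-- The blow-up `G(r) = G · I_r`. -/
def emptyBlowup {α : Type} (G : SimpleGraph α) (r : ℕ) : SimpleGraph (α × Fin r) :=
  lexProd G (⊥ : SimpleGraph (Fin r))

/-- `H` is a minor of `G`: branch sets indexed by the vertices of `H`. -/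
def IsMinor {W V : Type} (H : SimpleGraph W) (G : SimpleGraph V) : Prop :=
  ∃ f : W → Finset V,
    (∀ u, (G.induce ((f u : Set V))).Connected) ∧
    (∀ u u', u ≠ u' → Disjoint (f u) (f u')) ∧
    (∀ u u', H.Adj u u' → ∃ a ∈ f u, ∃ b ∈ f u', G.Adj a b)

/-- The k × k grid graph. -/
def gridGraph (k : ℕ) : SimpleGraph (Fin k × Fin k) where
  Adj a b := (a.1 = b.1 ∧ (a.2.val + 1 = b.2.val ∨ b.2.val + 1 = a.2.val)) ∨
             (a.2 = b.2 ∧ (a.1.val + 1 = b.1.val ∨ b.1.val + 1 = a.1.val))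
  symm := by
    constructor
    intro a b hab
    rcases hab with ⟨h1, h2⟩ | ⟨h1, h2⟩
    · exact Or.inl ⟨h1.symm, h2.symm⟩
    · exact Or.inr ⟨h1.symm, h2.symm⟩
  loopless := by
    constructor
    intro a ha
    rcases ha with ⟨_, h | h⟩ | ⟨_, h | h⟩ <;> omega

/-
Greedy argument: repeatedly take a smallest member `A₀` of the bramble and discard every member
meeting it. The discarded weight `w₀` is at most `|A₀|` (each vertex of `A₀` carries weight at
most 1), and every discarded member has at least `|A₀|` vertices, so `w₀² ≤ ∑ w(A)|A|` over the
discarded members. Cauchy–Schwarz over the `k` rounds gives `h² ≤ k ∑_A w(A)|A|`, and the last sum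
is at most `n` by double counting.
-/

lemma IsBramble.nonempty_of_mem {V : Type} {G : SimpleGraph V} {B : Finset (Finset V)}
    (hB : IsBramble G B) {A : Finset V} (hA : A ∈ B) : A.Nonempty :=
  Finset.coe_nonempty.mp (Set.nonempty_coe_sort.mp (hB.1 A hA).nonempty)

/-- Cauchy–Schwarz `(x + y)² / (k + 1) ≤ x² / k + y²`, cleared of denominators. -/
lemma add_sq_le_succ_mul_add {x y k s t : ℝ} (hk : 0 ≤ k) (hs : 0 ≤ s)
    (hx : x ^ 2 ≤ k * s) (hy : y ^ 2 ≤ t) : (x + y) ^ 2 ≤ (k + 1) * (s + t) := by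
  have hxy : 2 * x * y ≤ k * y ^ 2 + s := by
    rcases hk.eq_or_lt with rfl | hk
    · nlinarith [sq_nonneg x]
    · refine le_of_mul_le_mul_left ?_ hk
      nlinarith [sq_nonneg (k * y - x)]
  nlinarith [mul_le_mul_of_nonneg_left hy hk]

section Weight

variable {V : Type} [DecidableEq V] {B : Finset (Finset V)} {w : Finset V → ℝ}

lemma IsValidWeight.mono {B' : Finset (Finset V)} (hw : IsValidWeight B w) (hB' : B' ⊆ B) :
    IsValidWeight B' w :=
  ⟨fun A hA => hw.1 A (hB' hA), fun v =>
    (sum_le_sum_of_subset_of_nonneg (filter_subset_filter _ hB')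
      fun A hA _ => hw.1 A (mem_of_mem_filter A hA)).trans (hw.2 v)⟩

lemma IsValidWeight.sum_mul_card_inter_le (hw : IsValidWeight B w) (S : Finset V) :
    ∑ A ∈ B, w A * #(A ∩ S) ≤ #S :=
  calc ∑ A ∈ B, w A * #(A ∩ S)
      = ∑ A ∈ B, ∑ v ∈ S, if v ∈ A then w A else 0 := sum_congr rfl fun A _ => by
        rw [sum_ite_mem, sum_const, nsmul_eq_mul, inter_comm, mul_comm]
    _ = ∑ v ∈ S, ∑ A ∈ B with v ∈ A, w A := by
        rw [sum_comm]
        simp_rw [sum_filter]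
    _ ≤ ∑ _v ∈ S, (1 : ℝ) := sum_le_sum fun v _ => hw.2 v
    _ = #S := by simp

lemma IsValidWeight.sum_le_card_of_forall_not_disjoint (hw : IsValidWeight B w) {S : Finset V}
    (hB : ∀ A ∈ B, ¬Disjoint A S) : ∑ A ∈ B, w A ≤ #S :=
  calc ∑ A ∈ B, w A
      ≤ ∑ A ∈ B, w A * #(A ∩ S) := sum_le_sum fun A hA => by
        have hmeet : 1 ≤ #(A ∩ S) := card_pos.mpr (not_disjoint_iff_nonempty_inter.mp (hB A hA))
        exact le_mul_of_one_le_right (hw.1 A hA) (by exact_mod_cast hmeet)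
    _ ≤ #S := hw.sum_mul_card_inter_le S

lemma IsValidWeight.sq_sum_le_sum_mul_card_of_forall_meets_smaller (hw : IsValidWeight B w)
    {S : Finset V} (hB : ∀ A ∈ B, ¬Disjoint A S ∧ #S ≤ #A) :
    (∑ A ∈ B, w A) ^ 2 ≤ ∑ A ∈ B, w A * #A :=
  calc (∑ A ∈ B, w A) ^ 2
      ≤ (∑ A ∈ B, w A) * #S := by
        rw [sq]
        exact mul_le_mul_of_nonneg_left (hw.sum_le_card_of_forall_not_disjoint fun A hA => (hB A hA).1)
          (sum_nonneg hw.1)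
    _ = ∑ A ∈ B, w A * #S := sum_mul ..
    _ ≤ ∑ A ∈ B, w A * #A := sum_le_sum fun A hA =>
        mul_le_mul_of_nonneg_left (by exact_mod_cast (hB A hA).2) (hw.1 A hA)

theorem IsValidWeight.exists_pairwiseDisjoint_sq_sum_le (hw : IsValidWeight B w)
    (hne : ∀ A ∈ B, A.Nonempty) :
    ∃ D ⊆ B, (D : Set (Finset V)).PairwiseDisjoint id ∧
      (∑ A ∈ B, w A) ^ 2 ≤ #D * ∑ A ∈ B, w A * #A := by
  induction B using Finset.strongInduction with
  | H B ih =>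
  rcases B.eq_empty_or_nonempty with rfl | hB
  · exact ⟨∅, by simp⟩
  obtain ⟨A₀, hA₀, hmin⟩ := B.exists_min_image card hB
  set kept := {A ∈ B | Disjoint A A₀}
  set discarded := {A ∈ B | ¬Disjoint A A₀}
  have hA₀_kept : A₀ ∉ kept := fun h => (hne A₀ hA₀).ne_empty (disjoint_self.mp (mem_filter.mp h).2)
  obtain ⟨D, hD_kept, hD, hkept⟩ := ih kept ⟨filter_subset _ _, fun h => hA₀_kept (h hA₀)⟩
    (hw.mono (filter_subset _ _)) fun A hA => hne A (mem_of_mem_filter A hA)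
  have hdiscarded : (∑ A ∈ discarded, w A) ^ 2 ≤ ∑ A ∈ discarded, w A * #A :=
    (hw.mono (filter_subset _ _)).sq_sum_le_sum_mul_card_of_forall_meets_smaller fun A hA =>
      ⟨(mem_filter.mp hA).2, hmin A (mem_of_mem_filter A hA)⟩
  refine ⟨insert A₀ D, insert_subset hA₀ (hD_kept.trans (filter_subset _ _)), ?_, ?_⟩
  · rw [coe_insert]
    exact hD.insert fun A hA _ => (mem_filter.mp (hD_kept hA)).2.symm
  · rw [card_insert_of_notMem fun h => hA₀_kept (hD_kept h), Nat.cast_succ,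
      ← sum_filter_add_sum_filter_not B (fun A => Disjoint A A₀) w,
      ← sum_filter_add_sum_filter_not B (fun A => Disjoint A A₀) fun A => w A * #A]
    exact add_sq_le_succ_mul_add (Nat.cast_nonneg _)
      (sum_nonneg fun A hA => mul_nonneg (hw.1 A (mem_of_mem_filter A hA)) (Nat.cast_nonneg _))
      hkept hdiscarded

end Weight

/-- a bramble with a valid weighting of total weight `h` on a graph with `n`
vertices contains at least `h²/(2n)` pairwise vertex-disjoint members. -/
theorem bramble_exists_disjoint_subcollection
    {V : Type} [Fintype V] [DecidableEq V] (G : SimpleGraph V)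
    (B : Finset (Finset V)) (w : Finset V → ℝ) (h : ℝ)
    (hbr : IsBramble G B) (hw : IsValidWeight B w) (hh : h = ∑ A ∈ B, w A) :
    ∃ D ⊆ B, h ^ 2 / (2 * (Fintype.card V : ℝ)) ≤ (D.card : ℝ) ∧
      ∀ A ∈ D, ∀ A' ∈ D, A ≠ A' → Disjoint A A' := by
  obtain ⟨D, hDB, hD, hsq⟩ :=
    hw.exists_pairwiseDisjoint_sq_sum_le fun A hA => hbr.nonempty_of_mem hA
  refine ⟨D, hDB, div_le_of_le_mul₀ (by positivity) (Nat.cast_nonneg _) ?_,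
    fun A hA A' hA' hAA' => hD hA hA' hAA'⟩
  have hn : ∑ A ∈ B, w A * #A ≤ Fintype.card V := by
    simpa using hw.sum_mul_card_inter_le univ
  calc h ^ 2 ≤ #D * ∑ A ∈ B, w A * #A := hh ▸ hsq
    _ ≤ #D * Fintype.card V := mul_le_mul_of_nonneg_left hn (Nat.cast_nonneg _)
    _ ≤ #D * (2 * Fintype.card V) := by gcongr; linarith
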